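/- arXiv:2511.16367 — 5 statements merged into one kernel-verified Lean document; each statement's English description precedes it below -/
import Mathlib

section
/- In the two-player zero-sum game with A₁ = {T,B}, A₂ = ℕ, and player 1's payoff u₁(T,n) = 1/n, u₁(B,n) = −1/n, played with finitely additive strategies (κ₁, κ₂) where κ₁ = (p, 1−p), the pair (κ₁, κ₂) is a Nash equilibrium if and only if p ≥ 1/2 and κ₂ is a diffuse charge on ℕ. -/
/-- A charge: a finitely additive probability measure on the powerset of `α`. -/
structure IsCharge {α : Type*} (κ : Set α → ℝ) : Prop where
  nonneg : ∀ E, 0 ≤ κ E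
  empty : κ ∅ = 0
  total : κ Set.univ = 1
  additive : ∀ E G, Disjoint E G → κ (E ∪ G) = κ E + κ G

/-- The integral of a bounded function `u` against a charge `κ`, defined as the supremum of
integrals of simple (finite-range) functions lying below `u`. -/
noncomputable def chargeIntegral {α : Type*} (κ : Set α → ℝ) (u : α → ℝ) : ℝ :=
  sSup {r | ∃ g : α → ℝ, ∃ hg : (Set.range g).Finite,
    (∀ a, g a ≤ u a) ∧ r = ∑ c ∈ hg.toFinset, c * κ (g ⁻¹' {c})}

/-- The expected payoff of player 1 in the zero-sum game with `A₁ = {T,B}`, `A₂ = ℕ`,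
`u₁(T,n) = 1/n`, `u₁(B,n) = -1/n`, when player 1 plays `T` with probability `p`:
`U₁(p, κ₂) = (2p - 1)·∫ (1/n) dκ₂(n)`. -/
noncomputable def waldPayoff (p : ℝ) (κ₂ : Set ℕ+ → ℝ) : ℝ :=
  (2 * p - 1) * chargeIntegral κ₂ (fun n => 1 / ((n : ℕ) : ℝ))

/-!
Write `I = ∫ 1/n dκ₂ ∈ [0, 1]`, so player 1's payoff is `(2p - 1) I`, and `I = 0` exactly when
`κ₂` is diffuse. At an equilibrium the point masses `δ_n` available to player 2 give
`(2p - 1) I ≤ (2p - 1)/n` for all `n`, while player 1's deviation to `T` gives `I ≤ (2p - 1) I`;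
according to the sign of `2p - 1` one of the two forces `I = 0`, and then `δ_1` forces
`2p - 1 ≥ 0`. Conversely, against a diffuse `κ₂` every payoff of player 1 is `0`, and when
`2p - 1 ≥ 0` no charge of player 2 pushes it below `0`.
-/

open Set Filter Topology

namespace IsCharge

variable {α : Type*} {κ : Set α → ℝ}

theorem biUnion_finset {β : Type*} (hκ : IsCharge κ) (s : Finset β) (f : β → Set α)
    (hd : (s : Set β).PairwiseDisjoint f) : κ (⋃ b ∈ s, f b) = ∑ b ∈ s, κ (f b) := by
  classical
  induction s using Finset.induction_on with
  | empty => simpa using hκ.empty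
  | insert a s ha ih =>
    rw [Finset.coe_insert, pairwiseDisjoint_insert] at hd
    rw [Finset.set_biUnion_insert, hκ.additive, Finset.sum_insert ha, ih hd.1]
    exact disjoint_iUnion₂_right.mpr fun b hb => hd.2 b hb fun hab => ha (hab ▸ hb)

theorem eq_zero_of_finite (hκ : IsCharge κ) (hd : ∀ a, κ {a} = 0) {S : Set α}
    (hS : S.Finite) : κ S = 0 := by
  have hSeq : S = ⋃ a ∈ hS.toFinset, {a} := by ext; simp
  rw [hSeq, hκ.biUnion_finset _ _ fun a _ b _ hab => disjoint_singleton.mpr hab]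
  simp [hd]

theorem sum_preimage_singleton (hκ : IsCharge κ) (g : α → ℝ) {s : Finset ℝ}
    (hs : range g ⊆ s) : ∑ c ∈ s, κ (g ⁻¹' {c}) = 1 := by
  rw [← hκ.biUnion_finset s _ fun c _ d _ hcd => (disjoint_singleton.mpr hcd).preimage g,
    ← hκ.total]
  congr 1
  ext a
  simpa using hs (mem_range_self a)

end IsCharge

section ChargeIntegral

variable {α : Type*} {κ : Set α → ℝ} {u : α → ℝ}

open Classical in
noncomputable def diracCharge (a : α) : Set α → ℝ := fun E => if a ∈ E then 1 else 0

theorem isCharge_diracCharge (a : α) : IsCharge (diracCharge a) where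
  nonneg E := by unfold diracCharge; split <;> norm_num
  empty := by simp [diracCharge]
  total := by simp [diracCharge]
  additive E G hEG := by
    by_cases hE : a ∈ E
    · simp [diracCharge, hE, disjoint_left.mp hEG hE]
    · by_cases hG : a ∈ G <;> simp [diracCharge, hE, hG]

noncomputable def simpleIntegral (κ : Set α → ℝ) (g : α → ℝ) (hg : (range g).Finite) : ℝ :=
  ∑ c ∈ hg.toFinset, c * κ (g ⁻¹' {c})

theorem simpleIntegral_eq_sum_of_range_subset (hκ : IsCharge κ) {g : α → ℝ}
    (hg : (range g).Finite) {s : Finset ℝ} (hs : range g ⊆ s) :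
    simpleIntegral κ g hg = ∑ c ∈ s, c * κ (g ⁻¹' {c}) := by
  refine Finset.sum_subset (fun c hc => hs (hg.mem_toFinset.mp hc)) fun c _ hc => ?_
  have hempty : g ⁻¹' {c} = ∅ :=
    eq_empty_of_forall_notMem fun a ha => hc (hg.mem_toFinset.mpr ⟨a, ha⟩)
  rw [hempty, hκ.empty, mul_zero]

theorem simpleIntegral_le (hκ : IsCharge κ) {g : α → ℝ} (hg : (range g).Finite) {M : ℝ}
    (hgM : ∀ a, g a ≤ M) : simpleIntegral κ g hg ≤ M :=
  calc simpleIntegral κ g hg ≤ ∑ c ∈ hg.toFinset, M * κ (g ⁻¹' {c}) :=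
        Finset.sum_le_sum fun c hc => by
          obtain ⟨a, rfl⟩ := hg.mem_toFinset.mp hc
          exact mul_le_mul_of_nonneg_right (hgM a) (hκ.nonneg _)
    _ = M := by
        rw [← Finset.mul_sum, hκ.sum_preimage_singleton g hg.coe_toFinset.superset, mul_one]

theorem simpleIntegral_le_chargeIntegral (hκ : IsCharge κ) (hu : BddAbove (range u))
    {g : α → ℝ} (hg : (range g).Finite) (hgu : ∀ a, g a ≤ u a) :
    simpleIntegral κ g hg ≤ chargeIntegral κ u := by
  obtain ⟨M, hM⟩ := hu
  refine le_csSup ⟨M, ?_⟩ ⟨g, hg, hgu, rfl⟩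
  rintro _ ⟨g', hg', hg'u, rfl⟩
  exact simpleIntegral_le hκ hg' fun a => (hg'u a).trans (hM (mem_range_self a))

theorem chargeIntegral_nonneg (hκ : IsCharge κ) (hu0 : 0 ≤ u) (hu : BddAbove (range u)) :
    0 ≤ chargeIntegral κ u := by
  have hg : (range (0 : α → ℝ)).Finite := (finite_singleton 0).subset (range_const_subset)
  refine le_of_eq_of_le ?_ (simpleIntegral_le_chargeIntegral hκ hu hg hu0)
  refine (Finset.sum_eq_zero fun c hc => ?_).symm
  obtain ⟨a, rfl⟩ := hg.mem_toFinset.mp hc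
  simp

theorem mul_apply_singleton_le_chargeIntegral (hκ : IsCharge κ) (hu0 : 0 ≤ u)
    (hu : BddAbove (range u)) (a : α) : u a * κ {a} ≤ chargeIntegral κ u := by
  classical
  rcases eq_or_ne (u a) 0 with h0 | h0
  · simpa [h0] using chargeIntegral_nonneg hκ hu0 hu
  set g := ({a} : Set α).indicator u
  have hrange : range g ⊆ ({u a, 0} : Finset ℝ) := by
    rintro _ ⟨b, rfl⟩
    by_cases hb : b = a <;> simp [g, hb]
  have hg : (range g).Finite := (Finset.finite_toSet _).subset hrange
  have hpre : g ⁻¹' {u a} = {a} := by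
    ext b
    by_cases hb : b = a <;> simp [g, hb, Ne.symm h0]
  calc u a * κ {a} = simpleIntegral κ g hg := by
        rw [simpleIntegral_eq_sum_of_range_subset hκ hg hrange, Finset.sum_pair h0, hpre,
          zero_mul, add_zero]
    _ ≤ chargeIntegral κ u :=
        simpleIntegral_le_chargeIntegral hκ hu hg (indicator_le_self' fun b _ => hu0 b)

/-- A simple function below a function vanishing at infinity is positive only on a finite set,
which a diffuse charge does not see. -/
theorem chargeIntegral_nonpos_of_tendsto_cofinite (hκ : IsCharge κ) (hd : ∀ a, κ {a} = 0)
    (hu : Tendsto u cofinite (𝓝 0)) : chargeIntegral κ u ≤ 0 := by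
  refine Real.sSup_nonpos fun _ ⟨g, hg, hgu, hr⟩ => hr ▸ Finset.sum_nonpos fun c _ => ?_
  rcases le_or_gt c 0 with hc | hc
  · exact mul_nonpos_of_nonpos_of_nonneg hc (hκ.nonneg _)
  · have hfin : (g ⁻¹' {c}).Finite :=
      (eventually_cofinite.mp (hu.eventually (gt_mem_nhds hc))).subset fun a ha =>
        not_lt.mpr ((show g a = c from ha) ▸ hgu a)
    rw [hκ.eq_zero_of_finite hd hfin, mul_zero]

theorem chargeIntegral_diracCharge (hu0 : 0 ≤ u) (hu : BddAbove (range u)) (a : α) :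
    chargeIntegral (diracCharge a) u = u a := by
  classical
  refine le_antisymm (Real.sSup_le ?_ (hu0 a)) ?_
  · rintro _ ⟨g, hg, hgu, rfl⟩
    calc ∑ c ∈ hg.toFinset, c * diracCharge a (g ⁻¹' {c})
        = ∑ c ∈ hg.toFinset, if g a = c then c else 0 :=
          Finset.sum_congr rfl fun c _ => by by_cases h : g a = c <;> simp [diracCharge, h]
      _ = g a := by rw [Finset.sum_ite_eq, if_pos (hg.mem_toFinset.mpr (mem_range_self a))]
      _ ≤ u a := hgu a
  · simpa [diracCharge] using
      mul_apply_singleton_le_chargeIntegral (isCharge_diracCharge a) hu0 hu a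

end ChargeIntegral

theorem one_div_pnat_nonneg : 0 ≤ fun n : ℕ+ => 1 / ((n : ℕ) : ℝ) :=
  fun n => by positivity

theorem bddAbove_range_one_div_pnat : BddAbove (range fun n : ℕ+ => 1 / ((n : ℕ) : ℝ)) :=
  ⟨1, by
    rintro _ ⟨n, rfl⟩
    exact div_le_one_of_le₀ (by exact_mod_cast n.pos) (by positivity)⟩

theorem tendsto_one_div_pnat_cofinite :
    Tendsto (fun n : ℕ+ => 1 / ((n : ℕ) : ℝ)) cofinite (𝓝 0) :=
  tendsto_one_div_atTop_nhds_zero_nat.comp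
    (Nat.cofinite_eq_atTop ▸ PNat.coe_injective.tendsto_cofinite)

theorem chargeIntegral_one_div_eq_zero_iff {κ : Set ℕ+ → ℝ} (hκ : IsCharge κ) :
    chargeIntegral κ (fun n : ℕ+ => 1 / ((n : ℕ) : ℝ)) = 0 ↔ ∀ n : ℕ+, κ {n} = 0 := by
  refine ⟨fun h0 n => ?_, fun hd => ?_⟩
  · have h := mul_apply_singleton_le_chargeIntegral hκ one_div_pnat_nonneg
      bddAbove_range_one_div_pnat n
    rw [h0] at h
    exact le_antisymm (nonpos_of_mul_nonpos_right h (by positivity)) (hκ.nonneg _)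
  · exact le_antisymm (chargeIntegral_nonpos_of_tendsto_cofinite hκ hd
      tendsto_one_div_pnat_cofinite)
      (chargeIntegral_nonneg hκ one_div_pnat_nonneg bddAbove_range_one_div_pnat)

theorem waldPayoff_diracCharge (p : ℝ) (n : ℕ+) :
    waldPayoff p (diracCharge n) = (2 * p - 1) / (n : ℕ) := by
  rw [waldPayoff, chargeIntegral_diracCharge one_div_pnat_nonneg bddAbove_range_one_div_pnat,
    mul_one_div]

theorem wald_variant_nash_iff_general (p : ℝ)
    (κ₂ : Set ℕ+ → ℝ) (hκ₂ : IsCharge κ₂) :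
    ((∀ q ∈ Set.Icc (0 : ℝ) 1, waldPayoff q κ₂ ≤ waldPayoff p κ₂) ∧
     (∀ τ : Set ℕ+ → ℝ, IsCharge τ → waldPayoff p κ₂ ≤ waldPayoff p τ))
    ↔ (1 / 2 ≤ p ∧ ∀ n : ℕ+, κ₂ {n} = 0) := by
  rw [← chargeIntegral_one_div_eq_zero_iff hκ₂]
  have hI := chargeIntegral_nonneg hκ₂ one_div_pnat_nonneg bddAbove_range_one_div_pnat
  set I := chargeIntegral κ₂ (fun n : ℕ+ => 1 / ((n : ℕ) : ℝ)) with hIdef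
  constructor
  · rintro ⟨hbest₁, hbest₂⟩
    have hdirac (n : ℕ+) : (2 * p - 1) * I ≤ (2 * p - 1) * (1 / (n : ℕ)) :=
      mul_one_div (2 * p - 1) _ ▸ waldPayoff_diracCharge p n ▸ hbest₂ _ (isCharge_diracCharge n)
    have hI0 : I = 0 := by
      rcases lt_or_ge 0 (2 * p - 1) with hc | hc
      · refine le_antisymm (ge_of_tendsto' tendsto_one_div_add_atTop_nhds_zero_nat
          fun k => ?_) hI
        have h := hdirac k.succPNat
        rw [Nat.succPNat_coe, Nat.cast_succ] at h
        exact le_of_mul_le_mul_left h hc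
      · have h := hbest₁ 1 ⟨zero_le_one, le_rfl⟩
        simp only [waldPayoff, ← hIdef] at h
        nlinarith
    refine ⟨?_, hI0⟩
    have h := hdirac 1
    simp only [hI0, mul_zero, PNat.one_coe, Nat.cast_one, div_one, mul_one] at h
    linarith
  · rintro ⟨hp, hI0⟩
    refine ⟨fun q _ => by simp only [waldPayoff, ← hIdef, hI0, mul_zero, le_refl], fun τ hτ => ?_⟩
    simp only [waldPayoff, ← hIdef, hI0, mul_zero]
    exact mul_nonneg (by linarith)
      (chargeIntegral_nonneg hτ one_div_pnat_nonneg bddAbove_range_one_div_pnat)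

/-- In the zero-sum game with `A₁ = {T,B}`, `A₂ = ℕ`, and payoffs `u₁(T,n) = 1/n`,
`u₁(B,n) = -1/n`, played with finitely additive strategies, the pair `((p, 1-p), κ₂)` is a
Nash equilibrium precisely when `p ≥ 1/2` and `κ₂` is a diffuse charge on `ℕ`. -/
theorem wald_variant_nash_iff (p : ℝ) (hp : p ∈ Set.Icc (0 : ℝ) 1)
    (κ₂ : Set ℕ+ → ℝ) (hκ₂ : IsCharge κ₂) :
    ((∀ q ∈ Set.Icc (0 : ℝ) 1, waldPayoff q κ₂ ≤ waldPayoff p κ₂) ∧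
     (∀ τ : Set ℕ+ → ℝ, IsCharge τ → waldPayoff p κ₂ ≤ waldPayoff p τ))
    ↔ (1 / 2 ≤ p ∧ ∀ n : ℕ+, κ₂ {n} = 0) :=
  wald_variant_nash_iff_general p κ₂ hκ₂
end

section
/- For any natural numbers 1 < K₁ < K₂ < … < K_M, there exists a countably additive probability measure σ on ℕ with σ({k}) > 0 for every k, such that in the game where the opponent's payoff from playing ℓ against σ is (∑_{m<ℓ} σ({m}))/ℓ, the set of maximizers of ℓ ↦ (∑_{m<ℓ} σ({m}))/ℓ over ℕ is exactly {K₁, …, K_M}. -/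
/-!
Write `P(ℓ) = ∑_{m<ℓ} σ {m}`. If `P(ℓ) ≤ c ℓ` for all `ℓ ≥ 1`, the maximizers of `P(ℓ)/ℓ` are
exactly the points where `P` touches the line `ℓ ↦ c ℓ`, as soon as there is one. For a single
node `s` with `c s < 1`, the function rising linearly from `P(1) = 0` to `P(s) = c s` and then
approaching `1` geometrically with ratio `1 - c` touches the line only at `s` (beyond `s` by
Bernoulli's inequality). For the nodes `K₁, …, K_M` take the pointwise maximum of these
functions, which is again strictly increasing with limit `1` and touches the line exactly at
the `K_i`.
-/

open Finset Filter Topology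

lemma Finset.sup'_eq_iff_exists_eq {ι α : Type*} [LinearOrder α] {t : Finset ι}
    (ht : t.Nonempty) {f : ι → α} {a : α} (hf : ∀ i ∈ t, f i ≤ a) :
    t.sup' ht f = a ↔ ∃ i ∈ t, f i = a := by
  constructor
  · intro h
    obtain ⟨i, hi, hmax⟩ := t.exists_mem_eq_sup' ht f
    exact ⟨i, hi, hmax ▸ h⟩
  · rintro ⟨i, hi, rfl⟩
    exact le_antisymm (sup'_le ht f hf) (le_sup' f hi)

lemma setOf_forall_div_le_eq_setOf_eq_mul {F : ℕ → ℝ} {c : ℝ}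
    (hle : ∀ ℓ, 1 ≤ ℓ → F ℓ ≤ c * ℓ) (hne : {ℓ : ℕ | 1 ≤ ℓ ∧ F ℓ = c * ℓ}.Nonempty) :
    {ℓ : ℕ | 1 ≤ ℓ ∧ ∀ ℓ' : ℕ, 1 ≤ ℓ' → F ℓ' / ℓ' ≤ F ℓ / ℓ} =
      {ℓ : ℕ | 1 ≤ ℓ ∧ F ℓ = c * ℓ} := by
  have hdiv_le (ℓ : ℕ) (hℓ : 1 ≤ ℓ) : F ℓ / ℓ ≤ c :=
    (div_le_iff₀ (by exact_mod_cast hℓ)).2 (hle ℓ hℓ)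
  have hdiv_eq (ℓ : ℕ) (hℓ : 1 ≤ ℓ) : F ℓ / ℓ = c ↔ F ℓ = c * ℓ :=
    div_eq_iff (by positivity)
  obtain ⟨ℓ₀, hℓ₀, hF₀⟩ := hne
  ext ℓ
  refine ⟨fun ⟨hℓ, hmax⟩ ↦ ⟨hℓ, ?_⟩, fun ⟨hℓ, hF⟩ ↦ ⟨hℓ, fun ℓ' hℓ' ↦ ?_⟩⟩
  · refine (hdiv_eq ℓ hℓ).1 (le_antisymm (hdiv_le ℓ hℓ) ?_)
    calc c = F ℓ₀ / ℓ₀ := ((hdiv_eq ℓ₀ hℓ₀).2 hF₀).symm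
      _ ≤ F ℓ / ℓ := hmax ℓ₀ hℓ₀
  · rw [(hdiv_eq ℓ hℓ).2 hF]
    exact hdiv_le ℓ' hℓ'

/-- `F` is `P` of the full-support probability mass function `m ↦ F (m + 1) - F m` on
`{1, 2, …}`. -/
structure IsFullSupportCdf (F : ℕ → ℝ) : Prop where
  zero : F 0 = 0
  one : F 1 = 0
  lt_add_one : ∀ ℓ, 1 ≤ ℓ → F ℓ < F (ℓ + 1)
  tendsto : Tendsto F atTop (𝓝 1)

namespace IsFullSupportCdf

variable {F : ℕ → ℝ} (hF : IsFullSupportCdf F)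
include hF

lemma sum_range_sub (n : ℕ) : ∑ m ∈ range n, (F (m + 1) - F m) = F n := by
  rw [Finset.sum_range_sub, hF.zero, sub_zero]

lemma sub_nonneg (m : ℕ) : 0 ≤ F (m + 1) - F m := by
  rcases Nat.eq_zero_or_pos m with rfl | hm
  · simp [hF.zero, hF.one]
  · linarith [hF.lt_add_one m hm]

lemma hasSum_sub : HasSum (fun m ↦ F (m + 1) - F m) 1 := by
  rw [hasSum_iff_tendsto_nat_of_nonneg hF.sub_nonneg]
  simpa only [hF.sum_range_sub] using hF.tendsto

end IsFullSupportCdf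

lemma isFullSupportCdf_finset_sup' {ι : Type*} {t : Finset ι} (ht : t.Nonempty)
    {F : ι → ℕ → ℝ} (hF : ∀ i ∈ t, IsFullSupportCdf (F i)) :
    IsFullSupportCdf (fun ℓ ↦ t.sup' ht (F · ℓ)) where
  zero := by rw [sup'_congr ht rfl fun i hi ↦ (hF i hi).zero, sup'_const]
  one := by rw [sup'_congr ht rfl fun i hi ↦ (hF i hi).one, sup'_const]
  lt_add_one ℓ hℓ := by
    obtain ⟨i, hi, hmax⟩ := t.exists_mem_eq_sup' ht (F · ℓ)
    rw [hmax]
    exact ((hF i hi).lt_add_one ℓ hℓ).trans_le (le_sup' (F · (ℓ + 1)) hi)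
  tendsto := by
    simpa using Filter.Tendsto.finset_sup'_nhds_apply ht fun i hi ↦ (hF i hi).tendsto

/-- The truncated `ℓ - 1` makes it vanish at `0` as well as at `1`. -/
noncomputable def touchingCdf (c : ℝ) (s ℓ : ℕ) : ℝ :=
  if ℓ ≤ s then c * s * (ℓ - 1 : ℕ) / ((s : ℝ) - 1) else 1 - (1 - c * s) * (1 - c) ^ (ℓ - s)

section touchingCdf

variable {c : ℝ} {s ℓ : ℕ}

lemma touchingCdf_of_le (h : ℓ ≤ s) : touchingCdf c s ℓ = c * s * (ℓ - 1 : ℕ) / ((s : ℝ) - 1) :=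
  if_pos h

lemma touchingCdf_of_ge (hs : 2 ≤ s) (h : s ≤ ℓ) :
    touchingCdf c s ℓ = 1 - (1 - c * s) * (1 - c) ^ (ℓ - s) := by
  rcases h.eq_or_lt with rfl | h
  · have : (s : ℝ) - 1 ≠ 0 := by
      have : (2 : ℝ) ≤ s := by exact_mod_cast hs
      linarith
    rw [touchingCdf_of_le le_rfl, Nat.cast_pred (by omega), Nat.sub_self, pow_zero]
    field_simp
    ring
  · exact if_neg h.not_ge

lemma touchingCdf_self (hs : 2 ≤ s) : touchingCdf c s s = c * s := by
  simp [touchingCdf_of_ge hs le_rfl]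

variable (hs : 2 ≤ s) (hc : 0 < c) (hcs : c * s < 1)
include hs hc hcs

lemma touchingCdf_lt_mul (hℓ : 1 ≤ ℓ) (hne : ℓ ≠ s) : touchingCdf c s ℓ < c * ℓ := by
  have hs' : (2 : ℝ) ≤ s := by exact_mod_cast hs
  rcases hne.lt_or_gt with hlt | hgt
  · have hlt' : (ℓ : ℝ) < s := by exact_mod_cast hlt
    rw [touchingCdf_of_le hlt.le, Nat.cast_pred hℓ, div_lt_iff₀ (by linarith)]
    nlinarith
  · obtain ⟨t, rfl⟩ := Nat.exists_eq_add_of_lt hgt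
    have hbern := one_add_mul_le_pow (a := -c) (by nlinarith) (t + 1)
    rw [touchingCdf_of_ge hs (by omega), show s + t + 1 - s = t + 1 by omega]
    rw [← sub_eq_add_neg] at hbern
    push_cast at hbern ⊢
    have hcs' : 0 < 1 - c * s := by linarith
    have : 0 < c * c * s * (t + 1) := by positivity
    nlinarith [mul_le_mul_of_nonneg_left hbern hcs'.le]

lemma touchingCdf_le_mul (ℓ : ℕ) : touchingCdf c s ℓ ≤ c * ℓ := by
  rcases Nat.eq_zero_or_pos ℓ with rfl | hℓ
  · simp [touchingCdf_of_le]
  rcases eq_or_ne ℓ s with h | hne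
  · rw [h]
    exact (touchingCdf_self hs).le
  · exact (touchingCdf_lt_mul hs hc hcs hℓ hne).le

lemma touchingCdf_eq_mul_iff (hℓ : 1 ≤ ℓ) : touchingCdf c s ℓ = c * ℓ ↔ ℓ = s :=
  ⟨fun h ↦ by_contra fun hne ↦ (touchingCdf_lt_mul hs hc hcs hℓ hne).ne h,
    fun h ↦ by rw [h, touchingCdf_self hs]⟩

lemma isFullSupportCdf_touchingCdf : IsFullSupportCdf (touchingCdf c s) where
  zero := by simp [touchingCdf_of_le]
  one := by simp [touchingCdf_of_le (by omega : 1 ≤ s)]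
  lt_add_one ℓ hℓ := by
    have hs' : (2 : ℝ) ≤ s := by exact_mod_cast hs
    rcases lt_or_ge ℓ s with hlt | hge
    · rw [touchingCdf_of_le hlt.le, touchingCdf_of_le hlt, div_lt_div_iff_of_pos_right (by linarith)]
      push_cast [Nat.add_sub_cancel, Nat.cast_pred hℓ]
      have : 0 < c * s := by positivity
      nlinarith
    · rw [touchingCdf_of_ge hs hge, touchingCdf_of_ge hs (by omega), show ℓ + 1 - s = ℓ - s + 1 by omega,
        pow_succ]
      have : 0 < (1 - c) ^ (ℓ - s) := pow_pos (by nlinarith) _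
      nlinarith [mul_pos (mul_pos (by linarith : 0 < 1 - c * s) this) hc]
  tendsto := by
    have hs' : (2 : ℝ) ≤ s := by exact_mod_cast hs
    have hgeom : Tendsto (fun ℓ ↦ (1 - c) ^ (ℓ - s)) atTop (𝓝 0) :=
      (tendsto_pow_atTop_nhds_zero_of_lt_one (by nlinarith) (by linarith)).comp
        (tendsto_sub_atTop_nat s)
    refine Tendsto.congr' ?_ (by simpa using (hgeom.const_mul (1 - c * s)).const_sub 1)
    filter_upwards [eventually_ge_atTop s] with ℓ hℓ
    rw [touchingCdf_of_ge hs hℓ]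

end touchingCdf

lemma setOf_sup'_touchingCdf_eq_mul {ι : Type*} {t : Finset ι} (ht : t.Nonempty) {s : ι → ℕ}
    {c : ℝ} (hs : ∀ i ∈ t, 2 ≤ s i) (hc : 0 < c) (hcs : ∀ i ∈ t, c * s i < 1) :
    {ℓ : ℕ | 1 ≤ ℓ ∧ t.sup' ht (fun i ↦ touchingCdf c (s i) ℓ) = c * ℓ} = s '' t := by
  have hiff {ℓ : ℕ} (hℓ : 1 ≤ ℓ) :
      t.sup' ht (fun i ↦ touchingCdf c (s i) ℓ) = c * ℓ ↔ ∃ i ∈ t, s i = ℓ := by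
    rw [Finset.sup'_eq_iff_exists_eq ht fun i hi ↦ touchingCdf_le_mul (hs i hi) hc (hcs i hi) ℓ]
    exact exists_congr fun i ↦ and_congr_right fun hi ↦
      (touchingCdf_eq_mul_iff (hs i hi) hc (hcs i hi) hℓ).trans eq_comm
  ext ℓ
  refine ⟨fun ⟨hℓ, hsup⟩ ↦ (hiff hℓ).1 hsup, ?_⟩
  rintro ⟨i, hi, rfl⟩
  have hℓ : 1 ≤ s i := (hs i hi).trans' one_le_two
  exact ⟨hℓ, (hiff hℓ).2 ⟨i, hi, rfl⟩⟩

/-- For any natural numbers `1 < K₁ < K₂ < … < K_M` there is a strictly positive (on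
`{1,2,…}`) countably additive probability mass function `σ` on `ℕ` such that the set of
maximizers over `ℓ ≥ 1` of `ℓ ↦ (∑_{m<ℓ} σ(m))/ℓ` is exactly `{K₁, …, K_M}`.
(Here `σ 0 = 0` encodes that the action set is `{1,2,…}`.) -/
theorem exists_full_support_strategy_with_given_best_responses
    (M : ℕ) (hM : 0 < M) (K : Fin M → ℕ) (hKmono : StrictMono K) (hK1 : 1 < K ⟨0, hM⟩) :
    ∃ σ : ℕ → ℝ, σ 0 = 0 ∧ (∀ k : ℕ, 1 ≤ k → 0 < σ k) ∧ HasSum σ 1 ∧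
      {ℓ : ℕ | 1 ≤ ℓ ∧ ∀ ℓ' : ℕ, 1 ≤ ℓ' →
          (∑ m ∈ Finset.range ℓ', σ m) / (ℓ' : ℝ) ≤ (∑ m ∈ Finset.range ℓ, σ m) / (ℓ : ℝ)}
        = Set.range K := by
  have hne : (univ : Finset (Fin M)).Nonempty := ⟨⟨0, hM⟩, mem_univ _⟩
  have hK2 (i : Fin M) : 2 ≤ K i := hK1.trans_le (hKmono.monotone (Nat.zero_le i.val))
  set c : ℝ := 1 / (univ.sup K + 1)
  have hc : 0 < c := by positivity
  have hcK (i : Fin M) : c * K i < 1 := by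
    have : (K i : ℝ) ≤ univ.sup K := by exact_mod_cast le_sup (mem_univ i)
    rw [one_div_mul_eq_div, div_lt_one (by positivity)]
    linarith
  set F : ℕ → ℝ := fun ℓ ↦ univ.sup' hne (fun i ↦ touchingCdf c (K i) ℓ)
  have hF : IsFullSupportCdf F := isFullSupportCdf_finset_sup' hne fun i _ ↦
    isFullSupportCdf_touchingCdf (hK2 i) hc (hcK i)
  have hcontact : {ℓ : ℕ | 1 ≤ ℓ ∧ F ℓ = c * ℓ} = Set.range K := by
    rw [setOf_sup'_touchingCdf_eq_mul hne (fun i _ ↦ hK2 i) hc (fun i _ ↦ hcK i), coe_univ,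
      Set.image_univ]
  refine ⟨fun m ↦ F (m + 1) - F m, by simp [hF.zero, hF.one],
    fun k hk ↦ sub_pos.2 (hF.lt_add_one k hk), hF.hasSum_sub, ?_⟩
  simp only [hF.sum_range_sub]
  rw [← hcontact]
  refine setOf_forall_div_le_eq_setOf_eq_mul (fun ℓ _ ↦ sup'_le hne _ fun i _ ↦
    touchingCdf_le_mul (hK2 i) hc (hcK i) ℓ) ?_
  exact hcontact ▸ ⟨K ⟨0, hM⟩, Set.mem_range_self _⟩
end

section
/- In the two-player game with A₁ = A₂ = ℕ ∪ {∞} and symmetric payoffs given by u₁(m,n) = 1/m if m = n+1 with m,n finite, and 0 otherwise (and u₁(·,∞) = u₁(∞,·) = 0), played with countably additive strategies, the unique Nash equilibrium is the pure strategy pair (∞,∞), and the action ∞ is weakly dominated by every pure action a ≥ 2. -/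
/-- The action set `ℕ ∪ {∞}`, where `ℕ = {1,2,…}`. -/
abbrev Act := WithTop ℕ+

open Classical in
/-- Player 1's payoff: `u₁(m,n) = 1/m` if `m = n + 1` with `m, n` finite, and `0` otherwise
(in particular `u₁(·,∞) = u₁(∞,·) = 0`). -/
noncomputable def u13 (a b : Act) : ℝ :=
  match a, b with
  | (m : ℕ+), (n : ℕ+) => if m = n + 1 then 1 / ((m : ℕ) : ℝ) else 0
  | _, _ => 0

/-- A countably additive strategy on the countable action set, given by its probability
mass function. -/
def IsPmf (σ : Act → ℝ) : Prop := (∀ a, 0 ≤ σ a) ∧ HasSum σ 1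

/-- Expected payoff of player 1. -/
noncomputable def V1 (σ₁ σ₂ : Act → ℝ) : ℝ := ∑' a, ∑' b, σ₁ a * σ₂ b * u13 a b

/-- Expected payoff of player 2 (the game is symmetric). -/
noncomputable def V2 (σ₁ σ₂ : Act → ℝ) : ℝ := ∑' a, ∑' b, σ₁ a * σ₂ b * u13 b a

open Classical in
/-- The Dirac strategy on `∞`. -/
noncomputable def diracTop : Act → ℝ := fun a => if a = ⊤ then 1 else 0

/-!
If player 2 puts mass on a finite action `n`, playing `n + 1` earns player 1 a positive payoff,
so player 1's equilibrium payoff is positive and is earned by every action in the support of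
`σ₁`. Only an action `k + 1` facing mass at `k` earns anything, so every action in the support of
`σ₁` is the successor of a finite action in the support of `σ₂`; in particular `σ₁` has finite
mass as well, and the same holds with the players exchanged. A least finite action in the union
of the two supports then cannot exist.
-/

theorem not_of_forall_exists_lt {α : Type*} [Preorder α] [WellFoundedLT α] {P : α → Prop}
    (h : ∀ a, P a → ∃ b < a, P b) (a : α) : ¬ P a := by
  induction a using WellFoundedLT.induction with
  | _ a ih =>
    intro ha
    obtain ⟨b, hba, hb⟩ := h a ha
    exact ih b hba hb

theorem eq_of_tsum_mul_eq_of_le {α : Type*} {σ f : α → ℝ} {c : ℝ} (hσ : ∀ a, 0 ≤ σ a)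
    (hσ₁ : HasSum σ 1) (hf₀ : ∀ a, 0 ≤ f a) (hf : ∀ a, f a ≤ c)
    (havg : ∑' a, σ a * f a = c) {a : α} (ha : 0 < σ a) : f a = c := by
  by_contra hne
  have hle : ∀ x, σ x * f x ≤ σ x * c := fun x => mul_le_mul_of_nonneg_left (hf x) (hσ x)
  have hsum : Summable fun x => σ x * f x :=
    .of_nonneg_of_le (fun x => mul_nonneg (hσ x) (hf₀ x)) hle (hσ₁.summable.mul_right c)
  have hlt : ∑' x, σ x * f x < 1 * c :=
    hasSum_lt hle ((mul_lt_mul_iff_right₀ ha).2 ((hf a).lt_of_ne hne)) hsum.hasSum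
      (hσ₁.mul_right c)
  linarith

theorem u13_coe_coe (m n : ℕ+) :
    u13 m n = if m = n + 1 then 1 / ((m : ℕ) : ℝ) else 0 := rfl

theorem u13_top_left (b : Act) : u13 ⊤ b = 0 := rfl

theorem u13_top_right (a : Act) : u13 a ⊤ = 0 := by
  cases a using WithTop.recTopCoe <;> rfl

theorem u13_coe_succ_coe (k : ℕ+) : u13 ↑(k + 1) ↑k = 1 / ((k + 1 : ℕ+) : ℕ) := if_pos rfl

theorem u13_coe_succ_coe_pos (k : ℕ+) : 0 < u13 ↑(k + 1) ↑k := by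
  rw [u13_coe_succ_coe]
  positivity

theorem u13_nonneg (a b : Act) : 0 ≤ u13 a b := by
  cases a using WithTop.recTopCoe with
  | top => rw [u13_top_left]
  | coe m =>
    cases b using WithTop.recTopCoe with
    | top => rw [u13_top_right]
    | coe n => rw [u13_coe_coe]; split_ifs <;> positivity

theorem u13_le_one (a b : Act) : u13 a b ≤ 1 := by
  cases a using WithTop.recTopCoe with
  | top => rw [u13_top_left]; exact zero_le_one
  | coe m =>
    cases b using WithTop.recTopCoe with
    | top => rw [u13_top_right]; exact zero_le_one
    | coe n =>
      rw [u13_coe_coe]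
      split_ifs
      · exact div_le_one_of_le₀ (Nat.one_le_cast.2 m.pos) (by positivity)
      · exact zero_le_one

theorem exists_eq_succ_of_u13_pos {a b : Act} (h : 0 < u13 a b) :
    ∃ k : ℕ+, a = ↑(k + 1) ∧ b = k := by
  cases a using WithTop.recTopCoe with
  | top => exact absurd h (lt_irrefl 0)
  | coe m =>
    cases b using WithTop.recTopCoe with
    | top => rw [u13_top_right] at h; exact absurd h (lt_irrefl 0)
    | coe n =>
      rw [u13_coe_coe] at h
      split_ifs at h with hmn
      · exact ⟨n, by rw [hmn], rfl⟩
      · exact absurd h (lt_irrefl 0)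

theorem IsPmf.exists_pos {σ : Act → ℝ} (hσ : IsPmf σ) : ∃ a, 0 < σ a := by
  by_contra! h
  linarith [hasSum_le h hσ.2 hasSum_zero]

theorem isPmf_single (a : Act) : IsPmf (Pi.single a 1) :=
  ⟨fun b => by rw [Pi.single_apply]; split_ifs <;> norm_num, hasSum_pi_single a 1⟩

theorem diracTop_eq_single : diracTop = Pi.single ⊤ 1 := by
  funext a
  by_cases h : a = ⊤ <;> simp [diracTop, h]

theorem eq_diracTop_of_forall_coe_eq_zero {σ : Act → ℝ} (hσ : IsPmf σ)
    (h : ∀ n : ℕ+, σ n = 0) : σ = diracTop := by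
  have hσ_eq : σ = Pi.single ⊤ (σ ⊤) := by
    funext a
    cases a using WithTop.recTopCoe <;> simp [h]
  have htop : σ ⊤ = 1 := by
    have hsum := hasSum_pi_single (⊤ : Act) (σ ⊤)
    rw [← hσ_eq] at hsum
    exact hsum.unique hσ.2
  rw [diracTop_eq_single, hσ_eq, htop]

noncomputable def V1Pure (a : Act) (τ : Act → ℝ) : ℝ := ∑' b, τ b * u13 a b

def IsBestResponse (σ τ : Act → ℝ) : Prop := ∀ a, V1Pure a τ ≤ V1 σ τ

theorem V1_eq_tsum_V1Pure (σ τ : Act → ℝ) : V1 σ τ = ∑' a, σ a * V1Pure a τ := by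
  unfold V1 V1Pure
  simp only [← tsum_mul_left, mul_assoc]

theorem summable_mul_u13 {τ : Act → ℝ} (hτ : IsPmf τ) (a : Act) :
    Summable fun b => τ b * u13 a b :=
  .of_nonneg_of_le (fun b => mul_nonneg (hτ.1 b) (u13_nonneg a b))
    (fun b => mul_le_of_le_one_right (hτ.1 b) (u13_le_one a b)) hτ.2.summable

theorem V1Pure_nonneg {τ : Act → ℝ} (hτ : ∀ b, 0 ≤ τ b) (a : Act) : 0 ≤ V1Pure a τ :=
  tsum_nonneg fun b => mul_nonneg (hτ b) (u13_nonneg a b)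

theorem V1Pure_coe_succ_pos {τ : Act → ℝ} (hτ : IsPmf τ) {k : ℕ+} (hk : 0 < τ k) :
    0 < V1Pure ↑(k + 1) τ :=
  (mul_pos hk (u13_coe_succ_coe_pos k)).trans_le <|
    (summable_mul_u13 hτ _).le_tsum _ fun b _ => mul_nonneg (hτ.1 b) (u13_nonneg _ b)

theorem exists_eq_succ_of_V1Pure_pos {τ : Act → ℝ} (hτ : ∀ b, 0 ≤ τ b) {a : Act}
    (h : 0 < V1Pure a τ) : ∃ k : ℕ+, a = ↑(k + 1) ∧ 0 < τ k := by
  obtain ⟨b, hb⟩ : ∃ b, 0 < τ b * u13 a b := by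
    by_contra! hle
    exact h.not_ge (tsum_nonpos hle)
  obtain ⟨k, rfl, rfl⟩ := exists_eq_succ_of_u13_pos (pos_of_mul_pos_right hb (hτ _))
  exact ⟨k, rfl, pos_of_mul_pos_left hb (u13_nonneg _ _)⟩

theorem V1Pure_single (a b : Act) : V1Pure a (Pi.single b 1) = u13 a b := by
  rw [V1Pure, tsum_eq_single b fun c hc => by simp [hc]]
  simp

theorem V1_single_left (a : Act) (τ : Act → ℝ) : V1 (Pi.single a 1) τ = V1Pure a τ := by
  rw [V1_eq_tsum_V1Pure, tsum_eq_single a fun c hc => by simp [hc]]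
  simp

theorem V1_diracTop_right (σ : Act → ℝ) : V1 σ diracTop = 0 := by
  simp [V1_eq_tsum_V1Pure, diracTop_eq_single, V1Pure_single, u13_top_right]

theorem V2_eq_V1_swap {σ τ : Act → ℝ} (hσ : IsPmf σ) (hτ : IsPmf τ) : V2 σ τ = V1 τ σ := by
  have hsum : Summable (Function.uncurry fun a b => σ a * τ b * u13 b a) :=
    .of_nonneg_of_le (fun p => mul_nonneg (mul_nonneg (hσ.1 _) (hτ.1 _)) (u13_nonneg _ _))
      (fun p => mul_le_of_le_one_right (mul_nonneg (hσ.1 _) (hτ.1 _)) (u13_le_one _ _))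
      (hσ.2.summable.mul_of_nonneg hτ.2.summable hσ.1 hτ.1)
  rw [V2, ← hsum.tsum_comm]
  exact tsum_congr fun b => tsum_congr fun a => by ring

theorem IsBestResponse.eq_V1_of_pos {σ τ : Act → ℝ} (hσ : IsPmf σ) (hτ : IsPmf τ)
    (h : IsBestResponse σ τ) {a : Act} (ha : 0 < σ a) : V1Pure a τ = V1 σ τ :=
  eq_of_tsum_mul_eq_of_le hσ.1 hσ.2 (V1Pure_nonneg hτ.1) h (V1_eq_tsum_V1Pure σ τ).symm ha

theorem IsBestResponse.exists_eq_succ {σ τ : Act → ℝ} (hσ : IsPmf σ) (hτ : IsPmf τ)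
    (h : IsBestResponse σ τ) {n : ℕ+} (hn : 0 < τ n) {a : Act} (ha : 0 < σ a) :
    ∃ k : ℕ+, a = ↑(k + 1) ∧ 0 < τ k := by
  have hpos : 0 < V1 σ τ := (V1Pure_coe_succ_pos hτ hn).trans_le (h _)
  exact exists_eq_succ_of_V1Pure_pos hτ.1 (h.eq_V1_of_pos hσ hτ ha ▸ hpos)

theorem eq_diracTop_of_isBestResponse {σ τ : Act → ℝ} (hσ : IsPmf σ) (hτ : IsPmf τ)
    (hστ : IsBestResponse σ τ) (hτσ : IsBestResponse τ σ) : τ = diracTop := by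
  refine eq_diracTop_of_forall_coe_eq_zero hτ fun n => ?_
  by_contra hne
  have hn : 0 < τ n := (hτ.1 n).lt_of_ne' hne
  obtain ⟨a, ha⟩ := hσ.exists_pos
  obtain ⟨m, rfl, -⟩ := hστ.exists_eq_succ hσ hτ hn ha
  refine absurd (Or.inr hn) (not_of_forall_exists_lt (P := fun k : ℕ+ => 0 < σ k ∨ 0 < τ k) ?_ n)
  rintro k (hk | hk)
  · obtain ⟨j, hjk, hj⟩ := hστ.exists_eq_succ hσ hτ hn hk
    exact ⟨j, WithTop.coe_inj.1 hjk ▸ PNat.lt_add_right j 1, .inr hj⟩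
  · obtain ⟨j, hjk, hj⟩ := hτσ.exists_eq_succ hτ hσ ha hk
    exact ⟨j, WithTop.coe_inj.1 hjk ▸ PNat.lt_add_right j 1, .inl hj⟩

theorem isBestResponse_of_forall_V1_le {σ τ : Act → ℝ}
    (h : ∀ σ' : Act → ℝ, IsPmf σ' → V1 σ' τ ≤ V1 σ τ) : IsBestResponse σ τ := fun a => by
  simpa only [V1_single_left] using h _ (isPmf_single a)

theorem isBestResponse_of_forall_V2_le {σ τ : Act → ℝ} (hσ : IsPmf σ) (hτ : IsPmf τ)
    (h : ∀ τ' : Act → ℝ, IsPmf τ' → V2 σ τ' ≤ V2 σ τ) : IsBestResponse τ σ := fun a => by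
  simpa only [V2_eq_V1_swap hσ (isPmf_single a), V2_eq_V1_swap hσ hτ, V1_single_left]
    using h _ (isPmf_single a)

/-- In the symmetric two-player game on `ℕ ∪ {∞}` with `u₁(m,n) = 1/m` iff `m = n+1`, played
with countably additive strategies, the unique Nash equilibrium is `(∞, ∞)`, and the action
`∞` is weakly dominated by every pure action `a ≥ 2`. -/
theorem unique_nash_in_dominated_strategies :
    (∀ σ₁ σ₂ : Act → ℝ, IsPmf σ₁ → IsPmf σ₂ →
      (((∀ τ₁ : Act → ℝ, IsPmf τ₁ → V1 τ₁ σ₂ ≤ V1 σ₁ σ₂) ∧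
        (∀ τ₂ : Act → ℝ, IsPmf τ₂ → V2 σ₁ τ₂ ≤ V2 σ₁ σ₂)) ↔
        (σ₁ = diracTop ∧ σ₂ = diracTop))) ∧
    (∀ m : ℕ+, 2 ≤ m →
      (∀ c : Act, u13 ⊤ c ≤ u13 (m : Act) c) ∧ (∃ c : Act, u13 ⊤ c < u13 (m : Act) c)) := by
  refine ⟨fun σ₁ σ₂ h₁ h₂ => ⟨fun ⟨hbr₁, hbr₂⟩ => ?_, ?_⟩, fun m hm => ⟨?_, ?_⟩⟩
  · have b₁ := isBestResponse_of_forall_V1_le hbr₁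
    have b₂ := isBestResponse_of_forall_V2_le h₁ h₂ hbr₂
    exact ⟨eq_diracTop_of_isBestResponse h₂ h₁ b₂ b₁, eq_diracTop_of_isBestResponse h₁ h₂ b₁ b₂⟩
  · rintro ⟨rfl, rfl⟩
    have hdirac : IsPmf diracTop := diracTop_eq_single ▸ isPmf_single ⊤
    refine ⟨fun τ _ => by rw [V1_diracTop_right, V1_diracTop_right], fun τ hτ => ?_⟩
    rw [V2_eq_V1_swap hdirac hτ, V2_eq_V1_swap hdirac hdirac, V1_diracTop_right, V1_diracTop_right]
  · exact fun c => (u13_top_left c).trans_le (u13_nonneg _ c)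
  · obtain ⟨k, rfl⟩ := PNat.exists_eq_succ_of_ne_one (n := m) (by rintro rfl; simp at hm)
    exact ⟨k, (u13_top_left _).trans_lt (u13_coe_succ_coe_pos k)⟩
end

section
/- Let κ be a diffuse charge on (ℕ, 2^ℕ). Then κ is a hazy filter (a convex combination c·η + (1−c)·ξ, c ∈ (0,1], of two 0-1 valued diffuse charges η, ξ) if and only if for every partition of ℕ into three sets E₁, E₂, E₃, at least one Eᵢ satisfies κ(Eᵢ) = 0. -/
/-- A charge is diffuse if every singleton has measure zero. -/
def Diffuse {α : Type*} (κ : Set α → ℝ) : Prop := ∀ a : α, κ {a} = 0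

/-- An ultrafilter charge: a diffuse 0-1 valued charge. -/
def IsUltraCharge (κ : Set ℕ → ℝ) : Prop :=
  IsCharge κ ∧ Diffuse κ ∧ ∀ E : Set ℕ, κ E = 0 ∨ κ E = 1

/-- A hazy filter: a convex combination `c·η + (1-c)·ξ`, `c ∈ (0,1]`, of two ultrafilter
charges (the case `η = ξ`, i.e. an ultrafilter charge itself, is included). -/
def IsHazyFilter (κ : Set ℕ → ℝ) : Prop :=
  ∃ c : ℝ, 0 < c ∧ c ≤ 1 ∧ ∃ η ξ : Set ℕ → ℝ, IsUltraCharge η ∧ IsUltraCharge ξ ∧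
    ∀ E : Set ℕ, κ E = c * η E + (1 - c) * ξ E


/-!
If `κ = c·η + (1-c)·ξ` with `η, ξ` ultrafilter charges, then `κ E ≠ 0` forces `η E = 1` or
`ξ E = 1`; since `η` and `ξ` each give mass `1` to exactly one piece of a partition, at most
two pieces can be charged. Conversely, if `κ` is not itself `0`-`1` valued, pick `A` with
`0 < κ A < 1`. For any `E`, the partition `E ∩ A, A \ E, Aᶜ` has a null piece, and it cannot be
`Aᶜ`; hence `κ(· ∩ A) / κ A` is `0`-`1` valued, likewise for `Aᶜ`, and
`κ = κ A · κ(· | A) + (1 - κ A) · κ(· | Aᶜ)`.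
-/

/-- Junk value `0` when `κ B = 0`. -/
noncomputable def condCharge {α : Type*} (κ : Set α → ℝ) (B : Set α) : Set α → ℝ :=
  fun E => κ (E ∩ B) / κ B

namespace IsCharge

variable {α : Type*} {κ : Set α → ℝ}

theorem measure_compl (hκ : IsCharge κ) (E : Set α) : κ Eᶜ = 1 - κ E := by
  have h := hκ.additive E Eᶜ disjoint_compl_right
  rw [Set.union_compl_self, hκ.total] at h
  linarith

theorem mono (hκ : IsCharge κ) {E G : Set α} (h : E ⊆ G) : κ E ≤ κ G := by
  have hsplit := hκ.additive E (G \ E) Set.disjoint_sdiff_right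
  rw [Set.union_sdiff_cancel h] at hsplit
  linarith [hκ.nonneg (G \ E)]

theorem le_one (hκ : IsCharge κ) (E : Set α) : κ E ≤ 1 :=
  (hκ.mono (Set.subset_univ E)).trans_eq hκ.total

theorem inter_add_inter_compl (hκ : IsCharge κ) (E B : Set α) :
    κ (E ∩ B) + κ (E ∩ Bᶜ) = κ E := by
  rw [← hκ.additive _ _ (disjoint_compl_right.mono Set.inter_subset_right
    Set.inter_subset_right), Set.inter_union_compl]

theorem add_add_eq_one {E₁ E₂ E₃ : Set α} (hκ : IsCharge κ) (h12 : Disjoint E₁ E₂)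
    (h13 : Disjoint E₁ E₃) (h23 : Disjoint E₂ E₃) (hu : E₁ ∪ E₂ ∪ E₃ = Set.univ) :
    κ E₁ + κ E₂ + κ E₃ = 1 := by
  rw [← hκ.additive E₁ E₂ h12, ← hκ.additive _ E₃ (Set.disjoint_union_left.mpr ⟨h13, h23⟩), hu,
    hκ.total]

theorem cond (hκ : IsCharge κ) {B : Set α} (hB : 0 < κ B) : IsCharge (condCharge κ B) where
  nonneg E := div_nonneg (hκ.nonneg _) hB.le
  empty := by simp only [condCharge, Set.empty_inter, hκ.empty, zero_div]
  total := by simp only [condCharge, Set.univ_inter, div_self hB.ne']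
  additive E G hEG := by
    simp only [condCharge, Set.union_inter_distrib_right,
      hκ.additive _ _ (hEG.mono Set.inter_subset_left Set.inter_subset_left), add_div]

theorem eq_mul_cond_add_mul_cond (hκ : IsCharge κ) {B : Set α} (hB0 : κ B ≠ 0)
    (hB1 : κ B ≠ 1) (E : Set α) :
    κ E = κ B * condCharge κ B E + (1 - κ B) * condCharge κ Bᶜ E := by
  have hBc : κ Bᶜ ≠ 0 := by rw [hκ.measure_compl]; exact sub_ne_zero.mpr hB1.symm
  rw [condCharge, condCharge, mul_div_cancel₀ _ hB0, ← hκ.measure_compl,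
    mul_div_cancel₀ _ hBc, hκ.inter_add_inter_compl]

theorem inter_eq_zero_or_eq (hκ : IsCharge κ)
    (hpart : ∀ E₁ E₂ E₃ : Set α, Disjoint E₁ E₂ → Disjoint E₁ E₃ → Disjoint E₂ E₃ →
      E₁ ∪ E₂ ∪ E₃ = Set.univ → (κ E₁ = 0 ∨ κ E₂ = 0 ∨ κ E₃ = 0))
    {B : Set α} (hBc : 0 < κ Bᶜ) (E : Set α) : κ (E ∩ B) = 0 ∨ κ (E ∩ B) = κ B := by
  have hsplit : κ (E ∩ B) + κ (B \ E) = κ B := by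
    rw [← hκ.additive _ _ (Set.disjoint_sdiff_right.mono_left Set.inter_subset_left),
      Set.inter_comm, Set.inter_union_sdiff]
  have hu : E ∩ B ∪ B \ E ∪ Bᶜ = Set.univ := by
    rw [Set.inter_comm, Set.inter_union_sdiff, Set.union_compl_self]
  rcases hpart (E ∩ B) (B \ E) Bᶜ
      (Set.disjoint_sdiff_right.mono_left Set.inter_subset_left)
      (disjoint_compl_right.mono_left Set.inter_subset_right)
      (disjoint_compl_right.mono_left Set.sdiff_subset) hu with h | h | h
  · exact Or.inl h
  · exact Or.inr (by linarith)
  · exact absurd h hBc.ne'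

end IsCharge

theorem Diffuse.cond {α : Type*} {κ : Set α → ℝ} (hκ : IsCharge κ) (hd : Diffuse κ)
    (B : Set α) : Diffuse (condCharge κ B) := fun a => by
  have h : κ ({a} ∩ B) = 0 :=
    le_antisymm (hd a ▸ hκ.mono Set.inter_subset_left) (hκ.nonneg _)
  rw [condCharge, h, zero_div]

theorem one_le_add_of_ne_zero {κ η ξ : Set ℕ → ℝ} {c : ℝ} {E : Set ℕ} (hη : IsUltraCharge η)
    (hξ : IsUltraCharge ξ) (hκ : κ E = c * η E + (1 - c) * ξ E) (hE : κ E ≠ 0) :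
    1 ≤ η E + ξ E := by
  have := hη.1.nonneg E
  have := hξ.1.nonneg E
  rcases hη.2.2 E with h | h <;> rcases hξ.2.2 E with h' | h'
  · exact absurd (by rw [hκ, h, h']; ring) hE
  all_goals linarith

theorem isUltraCharge_condCharge {κ : Set ℕ → ℝ} (hκ : IsCharge κ) (hd : Diffuse κ)
    (hpart : ∀ E₁ E₂ E₃ : Set ℕ, Disjoint E₁ E₂ → Disjoint E₁ E₃ → Disjoint E₂ E₃ →
      E₁ ∪ E₂ ∪ E₃ = Set.univ → (κ E₁ = 0 ∨ κ E₂ = 0 ∨ κ E₃ = 0))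
    {B : Set ℕ} (hB : 0 < κ B) (hBc : 0 < κ Bᶜ) : IsUltraCharge (condCharge κ B) := by
  refine ⟨hκ.cond hB, hd.cond hκ B, fun E => ?_⟩
  rcases hκ.inter_eq_zero_or_eq hpart hBc E with h | h
  · exact Or.inl (by rw [condCharge, h, zero_div])
  · exact Or.inr (by rw [condCharge, h, div_self hB.ne'])

/-- A diffuse charge `κ` on `(ℕ, 2^ℕ)` is a hazy filter precisely when for every partition
of `ℕ` into three sets `E₁, E₂, E₃`, at least one `Eᵢ` satisfies `κ(Eᵢ) = 0`. -/
theorem hazy_filter_iff_partition (κ : Set ℕ → ℝ) (hκ : IsCharge κ) (hd : Diffuse κ) :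
    IsHazyFilter κ ↔
      ∀ E₁ E₂ E₃ : Set ℕ, Disjoint E₁ E₂ → Disjoint E₁ E₃ → Disjoint E₂ E₃ →
        E₁ ∪ E₂ ∪ E₃ = Set.univ → (κ E₁ = 0 ∨ κ E₂ = 0 ∨ κ E₃ = 0) := by
  constructor
  · rintro ⟨c, -, -, η, ξ, hη, hξ, hκc⟩ E₁ E₂ E₃ h12 h13 h23 hu
    by_contra! h
    have := one_le_add_of_ne_zero hη hξ (hκc E₁) h.1
    have := one_le_add_of_ne_zero hη hξ (hκc E₂) h.2.1
    have := one_le_add_of_ne_zero hη hξ (hκc E₃) h.2.2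
    linarith [hη.1.add_add_eq_one h12 h13 h23 hu, hξ.1.add_add_eq_one h12 h13 h23 hu]
  · intro hpart
    by_cases h01 : ∀ E, κ E = 0 ∨ κ E = 1
    · exact ⟨1, one_pos, le_rfl, κ, κ, ⟨hκ, hd, h01⟩, ⟨hκ, hd, h01⟩, fun E => by ring⟩
    push Not at h01
    obtain ⟨A, hA0, hA1⟩ := h01
    have hA : 0 < κ A := (hκ.nonneg A).lt_of_ne' hA0
    have hAc : 0 < κ Aᶜ := by
      rw [hκ.measure_compl]
      linarith [(hκ.le_one A).lt_of_ne hA1]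
    refine ⟨κ A, hA, hκ.le_one A, _, _,
      isUltraCharge_condCharge hκ hd hpart hA hAc,
      isUltraCharge_condCharge hκ hd hpart hAc (by rwa [compl_compl]),
      hκ.eq_mul_cond_add_mul_cond hA0 hA1⟩
end

section
/- Let X be a set, F a field on X, G a subfield of F, and ζ a finitely additive probability measure on G. Then ζ extends to a finitely additive probability measure on F. Consequently, if φ : A → B is a surjective map measurable with respect to fields F on A and G on B, then the induced pushforward map Φ from charges on (A,F) to charges on (B,G), Φ(κ)(G₀) = κ(φ⁻¹(G₀)), is surjective. -/
/-- A field of subsets of `X`. -/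
structure IsSetField {X : Type*} (F : Set (Set X)) : Prop where
  empty_mem : ∅ ∈ F
  compl_mem : ∀ E ∈ F, Eᶜ ∈ F
  union_mem : ∀ E ∈ F, ∀ G ∈ F, E ∪ G ∈ F

/-- A finitely additive probability measure (charge) on the field `F`. -/
structure IsChargeOn {X : Type*} (F : Set (Set X)) (σ : Set X → ℝ) : Prop where
  nonneg : ∀ E ∈ F, 0 ≤ σ E
  empty : σ ∅ = 0
  total : σ Set.univ = 1
  additive : ∀ E ∈ F, ∀ G ∈ F, Disjoint E G → σ (E ∪ G) = σ E + σ G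

/-!
Hahn–Banach. On bounded functions `X → ℝ` the functional `f ↦ ⨆ x, f x` is sublinear, and the
integral against `ζ` of a `G`-simple function `∑ cᵢ 1_{Aᵢ}` is dominated by it (which also makes
it well defined): splitting the domain along one `Aᵢ` at a time reduces this to the zero function.
So the integral extends to a linear functional `g` on all bounded functions with `g ≤ sup`, and
`E ↦ g 1_E` is a charge on all subsets of `X` that extends `ζ`. For the pushforward, `η`
transported along the surjection `φ` is a charge on the field of `φ`-preimages of sets of `G`,
to which this applies.
-/
section

open Set

namespace IsSetField

variable {X : Type*} {G : Set (Set X)}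

theorem univ_mem (hG : IsSetField G) : univ ∈ G := by
  simpa using hG.compl_mem ∅ hG.empty_mem

theorem inter_mem (hG : IsSetField G) {E D : Set X} (hE : E ∈ G) (hD : D ∈ G) : E ∩ D ∈ G := by
  simpa [compl_union] using
    hG.compl_mem _ (hG.union_mem _ (hG.compl_mem _ hE) _ (hG.compl_mem _ hD))

theorem image_preimage {A : Type*} (hG : IsSetField G) (φ : A → X) :
    IsSetField (preimage φ '' G) where
  empty_mem := ⟨∅, hG.empty_mem, preimage_empty⟩
  compl_mem := by
    rintro _ ⟨E, hE, rfl⟩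
    exact ⟨Eᶜ, hG.compl_mem E hE, preimage_compl⟩
  union_mem := by
    rintro _ ⟨E, hE, rfl⟩ _ ⟨D, hD, rfl⟩
    exact ⟨E ∪ D, hG.union_mem E hE D hD, preimage_union⟩

end IsSetField

namespace IsChargeOn

variable {X : Type*} {G : Set (Set X)} {ζ : Set X → ℝ}

theorem mono {F : Set (Set X)} (hζ : IsChargeOn G ζ) (hFG : F ⊆ G) : IsChargeOn F ζ where
  nonneg E hE := hζ.nonneg E (hFG hE)
  empty := hζ.empty
  total := hζ.total
  additive E hE D hD := hζ.additive E (hFG hE) D (hFG hD)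

theorem nonempty (hζ : IsChargeOn G ζ) : Nonempty X := by
  by_contra h
  have := hζ.total
  rw [univ_eq_empty_iff.2 (not_nonempty_iff.1 h), hζ.empty] at this
  exact zero_ne_one this

theorem inter_add_inter_compl (hG : IsSetField G) (hζ : IsChargeOn G ζ) {E D : Set X}
    (hE : E ∈ G) (hD : D ∈ G) : ζ (E ∩ D) + ζ (E ∩ Dᶜ) = ζ E := by
  rw [← hζ.additive _ (hG.inter_mem hE hD) _ (hG.inter_mem hE (hG.compl_mem D hD))
    (disjoint_compl_right.mono inter_subset_right inter_subset_right), inter_union_compl]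

theorem sum_mul_inter_le (hG : IsSetField G) (hζ : IsChargeOn G ζ) {ι : Type*}
    (A : ι → Set X) (hA : ∀ i, A i ∈ G) (c : ι → ℝ) (s : Finset ι) {D : Set X} (hD : D ∈ G)
    {M : ℝ} (hM : ∀ x ∈ D, ∑ i ∈ s, c i * (A i).indicator 1 x ≤ M) :
    ∑ i ∈ s, c i * ζ (A i ∩ D) ≤ M * ζ D := by
  classical
  induction s using Finset.induction_on generalizing D M with
  | empty =>
    rcases D.eq_empty_or_nonempty with rfl | ⟨x, hx⟩
    · simp [hζ.empty]
    · simpa using mul_nonneg (by simpa using hM x hx) (hζ.nonneg D hD)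
  | insert j s hj ih =>
    simp only [Finset.sum_insert hj] at hM ⊢
    -- split `D` along `A j`: there the function drops by `c j`, off it nothing changes
    have h_in := ih (hG.inter_mem hD (hA j)) (M := M - c j) fun x hx => by
      have := hM x hx.1
      simp only [indicator_of_mem hx.2, Pi.one_apply, mul_one] at this
      linarith
    have h_out := ih (hG.inter_mem hD (hG.compl_mem _ (hA j))) (M := M) fun x hx => by
      simpa [indicator_of_notMem hx.2] using hM x hx.1
    have split : ∀ E ∈ G, ζ (E ∩ (D ∩ A j)) + ζ (E ∩ (D ∩ (A j)ᶜ)) = ζ (E ∩ D) :=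
      fun E hE => by
        simpa only [inter_assoc] using
          hζ.inter_add_inter_compl hG (hG.inter_mem hE hD) (hA j)
    calc c j * ζ (A j ∩ D) + ∑ i ∈ s, c i * ζ (A i ∩ D)
        = c j * ζ (D ∩ A j) + (∑ i ∈ s, c i * ζ (A i ∩ (D ∩ A j)) +
            ∑ i ∈ s, c i * ζ (A i ∩ (D ∩ (A j)ᶜ))) := by
          rw [inter_comm, ← Finset.sum_add_distrib]
          simp only [← mul_add, split _ (hA _)]
      _ ≤ c j * ζ (D ∩ A j) + ((M - c j) * ζ (D ∩ A j) + M * ζ (D ∩ (A j)ᶜ)) := by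
          gcongr
      _ = M * (ζ (D ∩ A j) + ζ (D ∩ (A j)ᶜ)) := by ring
      _ = M * ζ D := by rw [hζ.inter_add_inter_compl hG hD (hA j)]

theorem comp_image {A : Type*} {φ : A → X} (hζ : IsChargeOn G ζ) (hφ : Function.Surjective φ) :
    IsChargeOn (preimage φ '' G) fun S => ζ (φ '' S) where
  nonneg := by
    rintro _ ⟨E, hE, rfl⟩
    simpa [image_preimage_eq E hφ] using hζ.nonneg E hE
  empty := by rw [image_empty, hζ.empty]
  total := by rw [image_univ, hφ.range_eq, hζ.total]
  additive := by
    rintro _ ⟨E, hE, rfl⟩ _ ⟨D, hD, rfl⟩ hED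
    rw [← preimage_union, image_preimage_eq _ hφ, image_preimage_eq _ hφ,
      image_preimage_eq _ hφ]
    exact hζ.additive E hE D hD (hED.of_preimage hφ)

end IsChargeOn

end

theorem exists_linearMap_comp_eq_of_le_sublinear {M E : Type*} [AddCommGroup M] [Module ℝ M]
    [AddCommGroup E] [Module ℝ E] (π : M →ₗ[ℝ] E) (L : M →ₗ[ℝ] ℝ) (N : E → ℝ)
    (N_hom : ∀ c : ℝ, 0 < c → ∀ x, N (c • x) = c * N x) (N_add : ∀ x y, N (x + y) ≤ N x + N y)
    (hL : ∀ m, L m ≤ N (π m)) : ∃ g : E →ₗ[ℝ] ℝ, g ∘ₗ π = L ∧ ∀ x, g x ≤ N x := by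
  have N_zero : N 0 = 0 := by
    have := N_hom 2 two_pos 0
    rw [smul_zero] at this
    linarith
  have hker : LinearMap.ker π ≤ LinearMap.ker L := fun m hm => by
    have h₁ := hL m
    have h₂ := hL (-m)
    rw [LinearMap.mem_ker] at hm ⊢
    rw [map_neg, map_neg, hm, neg_zero, N_zero] at *
    linarith
  let ℓ : LinearMap.range π →ₗ[ℝ] ℝ :=
    (LinearMap.ker π).liftQ L hker ∘ₗ π.quotKerEquivRange.symm.toLinearMap
  have hℓ : ∀ m, ℓ ⟨π m, LinearMap.mem_range_self π m⟩ = L m := fun m => by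
    simp [ℓ, LinearMap.quotKerEquivRange_symm_apply_image]
  obtain ⟨g, hg_ext, hg_le⟩ := exists_extension_of_le_sublinear ⟨LinearMap.range π, ℓ⟩ N N_hom
    N_add (by rintro ⟨_, m, rfl⟩; simpa [hℓ] using hL m)
  exact ⟨g, LinearMap.ext fun m => (hg_ext ⟨π m, LinearMap.mem_range_self π m⟩).trans (hℓ m),
    hg_le⟩

namespace BoundedContinuousFunction

variable {α : Type*} [TopologicalSpace α]

theorem iSup_smul_of_nonneg {r : ℝ} (hr : 0 ≤ r) (f : α →ᵇ ℝ) :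
    ⨆ x, (r • f) x = r * ⨆ x, f x := by
  simp only [smul_apply, smul_eq_mul, Real.mul_iSup_of_nonneg hr]

theorem iSup_add_le [Nonempty α] (f g : α →ᵇ ℝ) :
    ⨆ x, (f + g) x ≤ (⨆ x, f x) + ⨆ x, g x :=
  ciSup_le fun x => add_le_add (le_ciSup f.isBounded_range.bddAbove x)
    (le_ciSup g.isBounded_range.bddAbove x)

end BoundedContinuousFunction

section

open BoundedContinuousFunction

namespace IsChargeOn

variable {X : Type*} {G : Set (Set X)} {ζ : Set X → ℝ}

theorem linearCombination_le_iSup [TopologicalSpace X] [DiscreteTopology X]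
    (hG : IsSetField G) (hζ : IsChargeOn G ζ) (c : G →₀ ℝ) :
    Finsupp.linearCombination ℝ (fun E : G => ζ E) c ≤
      ⨆ x, Finsupp.linearCombination ℝ
        (fun E : G => indicator (E : Set X) (isClopen_discrete _)) c x := by
  set f := Finsupp.linearCombination ℝ
    (fun E : G => indicator (E : Set X) (isClopen_discrete _)) c
  have hf : ∀ x, f x = ∑ E ∈ c.support, c E * (E : Set X).indicator 1 x := fun x => by
    simp [f, Finsupp.linearCombination_apply, Finsupp.sum]
  simpa [Finsupp.linearCombination_apply, Finsupp.sum, hζ.total] using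
    hζ.sum_mul_inter_le hG (↑) Subtype.prop c c.support hG.univ_mem
      fun x _ => hf x ▸ le_ciSup f.isBounded_range.bddAbove x

end IsChargeOn

theorem isChargeOn_univ_of_le_iSup {X : Type*} [TopologicalSpace X] [DiscreteTopology X]
    (g : (X →ᵇ ℝ) →ₗ[ℝ] ℝ) (hg : ∀ f, g f ≤ ⨆ x, f x) (hg_one : g 1 = 1) :
    IsChargeOn Set.univ fun E => g (indicator E (isClopen_discrete E)) where
  nonneg E _ := by
    have := hg (-indicator E (isClopen_discrete E))
    have : ⨆ x, (-indicator E (isClopen_discrete E)) x ≤ 0 :=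
      Real.iSup_nonpos fun x => by by_cases hx : x ∈ E <;> simp [hx]
    rw [map_neg] at *
    linarith
  empty := by
    rw [show indicator (∅ : Set X) _ = 0 by ext; simp, map_zero]
  total := by
    rw [show indicator (Set.univ : Set X) _ = 1 by ext; simp, hg_one]
  additive E _ D _ hED := by
    rw [← map_add]
    congr 1
    ext x
    simp [Set.indicator_union_of_disjoint hED]

theorem IsChargeOn.exists_extension_univ {X : Type*} {G : Set (Set X)} {ζ : Set X → ℝ}
    (hG : IsSetField G) (hζ : IsChargeOn G ζ) :
    ∃ σ : Set X → ℝ, IsChargeOn Set.univ σ ∧ ∀ E ∈ G, σ E = ζ E := by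
  have : Nonempty X := hζ.nonempty
  let _ : TopologicalSpace X := ⊥
  have : DiscreteTopology X := ⟨rfl⟩
  obtain ⟨g, hg_comp, hg_le⟩ := exists_linearMap_comp_eq_of_le_sublinear
    (Finsupp.linearCombination ℝ fun E : G => indicator (E : Set X) (isClopen_discrete _))
    (Finsupp.linearCombination ℝ fun E : G => ζ E) (fun f => ⨆ x, f x)
    (fun r hr f => iSup_smul_of_nonneg hr.le f) BoundedContinuousFunction.iSup_add_le
    (hζ.linearCombination_le_iSup hG)
  have hg_ind : ∀ E ∈ G, g (indicator E (isClopen_discrete E)) = ζ E := fun E hE => by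
    simpa using LinearMap.congr_fun hg_comp (Finsupp.single ⟨E, hE⟩ 1)
  refine ⟨_, isChargeOn_univ_of_le_iSup g hg_le ?_, hg_ind⟩
  rw [← hζ.total, ← hg_ind Set.univ hG.univ_mem]
  congr 1
  ext
  simp

end

/-- Every charge on a subfield `G` of a field `F` extends to a charge on `F`
(Łoś–Marczewski / Horn–Tarski); consequently, for any surjective field-measurable map
`φ : A → B` the induced pushforward map on charges, `Φ(κ)(G₀) = κ(φ⁻¹(G₀))`, is
surjective. -/
theorem charge_extension_and_pushforward_surjective :
    (∀ (X : Type) (F G : Set (Set X)), IsSetField F → IsSetField G → G ⊆ F →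
      ∀ ζ : Set X → ℝ, IsChargeOn G ζ →
        ∃ σ : Set X → ℝ, IsChargeOn F σ ∧ ∀ E ∈ G, σ E = ζ E) ∧
    (∀ (A B : Type) (F : Set (Set A)) (G : Set (Set B)), IsSetField F → IsSetField G →
      ∀ φ : A → B, Function.Surjective φ → (∀ G₀ ∈ G, φ ⁻¹' G₀ ∈ F) →
        ∀ η : Set B → ℝ, IsChargeOn G η →
          ∃ κ : Set A → ℝ, IsChargeOn F κ ∧ ∀ G₀ ∈ G, κ (φ ⁻¹' G₀) = η G₀) := by
  refine ⟨fun X F G _ hG _ ζ hζ => ?_, fun A B F G _ hG φ hφ _ η hη => ?_⟩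
  · obtain ⟨σ, hσ, hσζ⟩ := hζ.exists_extension_univ hG
    exact ⟨σ, hσ.mono (Set.subset_univ F), hσζ⟩
  · obtain ⟨κ, hκ, hκη⟩ := (hη.comp_image hφ).exists_extension_univ (hG.image_preimage φ)
    refine ⟨κ, hκ.mono (Set.subset_univ F), fun E hE => ?_⟩
    rw [hκη _ (Set.mem_image_of_mem _ hE), Set.image_preimage_eq E hφ]
end
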